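/- If Q(x) is strictly convex for x > 0 and P is the corresponding constrained error probability function, then the global minimizer of P over the feasible set (excluding points where all Q-arguments vanish) is unique. -/

import Mathlib

/-!
On the unit sphere the normalisation `‖w‖` disappears, and each argument `Re{w h a − w H s_b}` is
real-linear in `w`. For two distinct feasible unit vectors, strict convexity of the Euclidean norm
gives `t = ‖w₁ + w₂‖ < 2`, so the arguments at `w₀ = (w₁ + w₂) / t` dominate the averages of those
at `w₁` and `w₂`, strictly where they are positive. Since `Q` is strictly decreasing and convex on
`[0, ∞)`, `P(w₀) < (P(w₁) + P(w₂)) / 2`, which is impossible if both are minimisers.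
-/

open MeasureTheory

/-- The Gaussian Q-function. -/
noncomputable def gaussQ (x : ℝ) : ℝ :=
  (1 / Real.sqrt (2 * Real.pi)) * ∫ u in Set.Ioi x, Real.exp (-u ^ 2 / 2)

open Set Real

lemma integrable_exp_neg_sq_div_two : Integrable fun u : ℝ => exp (-u ^ 2 / 2) := by
  simpa [neg_div, div_eq_inv_mul] using integrable_exp_neg_mul_sq (by norm_num : (0 : ℝ) < 2⁻¹)

lemma hasDerivAt_gaussQ (x : ℝ) :
    HasDerivAt gaussQ (-(1 / √(2 * π) * exp (-x ^ 2 / 2))) x := by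
  have hφ : Continuous fun u : ℝ => exp (-u ^ 2 / 2) := by fun_prop
  have hQ : gaussQ = fun x => 1 / √(2 * π) *
      ((∫ u in Ioi 0, exp (-u ^ 2 / 2)) - ∫ u in 0..x, exp (-u ^ 2 / 2)) := by
    funext x
    rw [gaussQ, ← intervalIntegral.integral_Ioi_sub_Ioi' integrable_exp_neg_sq_div_two.integrableOn
      integrable_exp_neg_sq_div_two.integrableOn, sub_sub_cancel]
  rw [hQ, ← mul_neg]
  exact ((hφ.integral_hasStrictDerivAt 0 x).hasDerivAt.const_sub _).const_mul _

lemma gaussQ_strictAnti : StrictAnti gaussQ :=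
  strictAnti_of_hasDerivAt_neg hasDerivAt_gaussQ fun x => by
    rw [neg_lt_zero]; positivity

lemma gaussQ_strictConvexOn : StrictConvexOn ℝ (Ici 0) gaussQ := by
  have hderiv : deriv gaussQ = fun x => -(1 / √(2 * π) * exp (-x ^ 2 / 2)) :=
    funext fun x => (hasDerivAt_gaussQ x).deriv
  refine StrictMonoOn.strictConvexOn_of_deriv (convex_Ici 0)
    (fun x _ => (hasDerivAt_gaussQ x).continuousAt.continuousWithinAt) ?_
  rw [hderiv, interior_Ici]
  intro x hx y _ hxy
  simp only [neg_lt_neg_iff]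
  gcongr
  exact hx.le

section FeasibleSphere

variable {E ι : Type*} [NormedAddCommGroup E] [NormedSpace ℝ E]

def feasibleSphere (L : E →ₗ[ℝ] ι → ℝ) : Set E := {w | ‖w‖ = 1 ∧ 0 ≤ L w ∧ L w ≠ 0}

variable {L : E →ₗ[ℝ] ι → ℝ} {w₁ w₂ : E}

lemma feasibleSphere_smul {c : ℝ} (hc : 0 < c) : feasibleSphere (c • L) = feasibleSphere L := by
  ext w
  simp [feasibleSphere, smul_nonneg_iff_nonneg_of_pos_left hc, hc.ne']

lemma map_add_ne_zero_of_mem_feasibleSphere (h₁ : w₁ ∈ feasibleSphere L)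
    (h₂ : w₂ ∈ feasibleSphere L) : L (w₁ + w₂) ≠ 0 := by
  rw [map_add]
  exact fun h => h₁.2.2 ((add_eq_zero_iff_of_nonneg h₁.2.1 h₂.2.1).1 h).1

lemma normalize_add_mem_feasibleSphere (h₁ : w₁ ∈ feasibleSphere L)
    (h₂ : w₂ ∈ feasibleSphere L) : ‖w₁ + w₂‖⁻¹ • (w₁ + w₂) ∈ feasibleSphere L := by
  have hL := map_add_ne_zero_of_mem_feasibleSphere h₁ h₂
  have hw : w₁ + w₂ ≠ 0 := fun h => hL (by rw [h, map_zero])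
  refine ⟨norm_smul_inv_norm hw, ?_, ?_⟩
  · rw [map_smul, map_add]
    exact smul_nonneg (inv_nonneg.2 (norm_nonneg _)) (add_nonneg h₁.2.1 h₂.2.1)
  · rw [map_smul]
    exact smul_ne_zero (inv_ne_zero (norm_ne_zero_iff.2 hw)) hL

lemma ConvexOn.map_add_div_two_le {s : Set ℝ} {g : ℝ → ℝ} (hg : ConvexOn ℝ s g) {x y : ℝ}
    (hx : x ∈ s) (hy : y ∈ s) : g ((x + y) / 2) ≤ (g x + g y) / 2 := by
  calc g ((x + y) / 2) = g ((1 / 2 : ℝ) • x + (1 / 2 : ℝ) • y) := by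
        rw [smul_eq_mul, smul_eq_mul]; ring_nf
    _ ≤ (1 / 2 : ℝ) • g x + (1 / 2 : ℝ) • g y :=
        hg.2 hx hy (by norm_num) (by norm_num) (add_halves 1)
    _ = (g x + g y) / 2 := by rw [smul_eq_mul, smul_eq_mul]; ring

variable [StrictConvexSpace ℝ E] [Fintype ι] {g : ℝ → ℝ}

lemma sum_normalize_add_lt (hg_anti : StrictAnti g) (hg_conv : ConvexOn ℝ (Ici 0) g)
    (h₁ : w₁ ∈ feasibleSphere L) (h₂ : w₂ ∈ feasibleSphere L) (hne : w₁ ≠ w₂) :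
    ∑ b, g (L (‖w₁ + w₂‖⁻¹ • (w₁ + w₂)) b) < (∑ b, g (L w₁ b) + ∑ b, g (L w₂ b)) / 2 := by
  set t := ‖w₁ + w₂‖
  have ht0 : 0 < t := norm_pos_iff.2 fun h =>
    map_add_ne_zero_of_mem_feasibleSphere h₁ h₂ (by rw [h, map_zero])
  have ht2 : t < 2 := by
    have := norm_add_lt_of_not_sameRay ((not_sameRay_iff_of_norm_eq (h₁.1.trans h₂.1.symm)).2 hne)
    rwa [h₁.1, h₂.1, one_add_one_eq_two] at this
  have hinv : 2⁻¹ < t⁻¹ := inv_strictAnti₀ ht0 ht2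
  obtain ⟨b₀, hb₀⟩ := Function.ne_iff.1 h₁.2.2
  have hsum : ∀ b, 0 ≤ L w₁ b + L w₂ b := fun b => add_nonneg (h₁.2.1 b) (h₂.2.1 b)
  calc ∑ b, g (L (t⁻¹ • (w₁ + w₂)) b)
      < ∑ b, g ((L w₁ b + L w₂ b) / 2) := by
        simp only [map_smul, map_add, Pi.smul_apply, Pi.add_apply, smul_eq_mul, div_eq_inv_mul]
        refine Finset.sum_lt_sum (fun b _ => hg_anti.antitone ?_) ⟨b₀, Finset.mem_univ _, hg_anti ?_⟩
        · exact mul_le_mul_of_nonneg_right hinv.le (hsum b)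
        · exact mul_lt_mul_of_pos_right hinv ((hsum b₀).lt_of_ne' fun h => hb₀ <|
            ((add_eq_zero_iff_of_nonneg (h₁.2.1 b₀) (h₂.2.1 b₀)).1 h).1)
    _ ≤ ∑ b, (g (L w₁ b) + g (L w₂ b)) / 2 :=
        Finset.sum_le_sum fun b _ => hg_conv.map_add_div_two_le (h₁.2.1 b) (h₂.2.1 b)
    _ = (∑ b, g (L w₁ b) + ∑ b, g (L w₂ b)) / 2 := by rw [← Finset.sum_div, Finset.sum_add_distrib]

theorem eq_of_isMinOn_feasibleSphere (hg_anti : StrictAnti g) (hg_conv : ConvexOn ℝ (Ici 0) g)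
    (h₁ : w₁ ∈ feasibleSphere L) (h₂ : w₂ ∈ feasibleSphere L)
    (hmin₁ : IsMinOn (fun w => ∑ b, g (L w b)) (feasibleSphere L) w₁)
    (hmin₂ : IsMinOn (fun w => ∑ b, g (L w b)) (feasibleSphere L) w₂) : w₁ = w₂ := by
  by_contra hne
  have hlt := sum_normalize_add_lt hg_anti hg_conv h₁ h₂ hne
  have h₁₀ := isMinOn_iff.1 hmin₁ _ (normalize_add_mem_feasibleSphere h₁ h₂)
  have h₂₁ := isMinOn_iff.1 hmin₂ _ h₁
  linarith

end FeasibleSphere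

def mpeArg {N K B : ℕ} (h : Fin N → ℂ) (H : Matrix (Fin N) (Fin K) ℂ) (a : ℝ)
    (s : Fin B → Fin K → ℝ) : (Fin N → ℂ) →ₗ[ℝ] Fin B → ℝ where
  toFun w b := ((∑ i, w i * h i) * (a : ℂ) - ∑ i, w i * ∑ j, H i j * (s b j : ℂ)).re
  map_add' u v := by
    ext b
    simp only [Pi.add_apply, add_mul, Finset.sum_add_distrib, ← Complex.add_re]
    ring_nf
  map_smul' r w := by
    ext b
    simp only [Pi.smul_apply, Complex.real_smul, mul_assoc, ← Finset.mul_sum, ← mul_sub,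
      Complex.re_ofReal_mul, smul_eq_mul, RingHom.id_apply]

lemma sqrt_sum_normSq_eq_norm {N : ℕ} (w : Fin N → ℂ) :
    √(∑ i, Complex.normSq (w i)) = ‖WithLp.toLp 2 w‖ := by
  simp [EuclideanSpace.norm_eq, Complex.normSq_eq_norm_sq]

theorem mpe_globalMin_unique_general (N K B : ℕ)
    (h : Fin N → ℂ) (H : Matrix (Fin N) (Fin K) ℂ)
    (a σz C : ℝ) (hσ : 0 < σz) (hC : 0 < C)
    (s : Fin B → Fin K → ℝ)
    (arg : (Fin N → ℂ) → Fin B → ℝ)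
    (harg : ∀ w b, arg w b =
      ((∑ i, w i * h i) * (a : ℂ) - ∑ i, w i * ∑ j, H i j * (s b j : ℂ)).re)
    (F1 : Set (Fin N → ℂ))
    (hF1 : F1 = {w : Fin N → ℂ |
      Real.sqrt (∑ i, Complex.normSq (w i)) = 1 ∧ (∀ b, 0 ≤ arg w b) ∧
        ¬(∀ b, arg w b = 0)})
    (P : (Fin N → ℂ) → ℝ)
    (hP : ∀ w, P w = C * ∑ b : Fin B,
      gaussQ (arg w b / ((σz / Real.sqrt 2) * Real.sqrt (∑ i, Complex.normSq (w i)))))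
    (w₁ w₂ : Fin N → ℂ) (hw₁ : w₁ ∈ F1) (hw₂ : w₂ ∈ F1)
    (hmin₁ : ∀ w ∈ F1, P w₁ ≤ P w) (hmin₂ : ∀ w ∈ F1, P w₂ ≤ P w) :
    w₁ = w₂ := by
  obtain rfl : arg = mpeArg h H a s := funext fun w => funext (harg w)
  set A := (mpeArg h H a s).comp (WithLp.linearEquiv 2 ℝ (Fin N → ℂ)).toLinearMap
  set σ := σz / √2
  have hσ' : 0 < σ := by positivity
  have hF : ∀ w, w ∈ F1 ↔ WithLp.toLp 2 w ∈ feasibleSphere (σ⁻¹ • A) := by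
    intro w
    rw [feasibleSphere_smul (inv_pos.2 hσ'), hF1]
    simp [feasibleSphere, A, sqrt_sum_normSq_eq_norm, Pi.le_def, funext_iff]
  have hP' : ∀ w ∈ F1, P w = C * ∑ b, gaussQ ((σ⁻¹ • A) (WithLp.toLp 2 w) b) := by
    intro w hw
    rw [hP, sqrt_sum_normSq_eq_norm, ((hF w).1 hw).1]
    simp [A, div_eq_inv_mul]
  have hmin : ∀ w ∈ F1, (∀ v ∈ F1, P w ≤ P v) → IsMinOn (fun v => ∑ b, gaussQ ((σ⁻¹ • A) v b))
      (feasibleSphere (σ⁻¹ • A)) (WithLp.toLp 2 w) := by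
    intro w hw hw_min v hv
    have := hw_min (WithLp.ofLp v) ((hF _).2 hv)
    rwa [hP' w hw, hP' _ ((hF _).2 hv), mul_le_mul_iff_right₀ hC] at this
  exact WithLp.toLp_injective 2 <| eq_of_isMinOn_feasibleSphere gaussQ_strictAnti
    gaussQ_strictConvexOn.convexOn ((hF w₁).1 hw₁) ((hF w₂).1 hw₂)
    (hmin w₁ hw₁ hmin₁) (hmin w₂ hw₂ hmin₂)

theorem mpe_globalMin_unique (N K B : ℕ)
    (h : Fin N → ℂ) (H : Matrix (Fin N) (Fin K) ℂ)
    (a σz C : ℝ) (ha : 0 < a) (hσ : 0 < σz) (hC : 0 < C)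
    (s : Fin B → Fin K → ℝ)
    (arg : (Fin N → ℂ) → Fin B → ℝ)
    (harg : ∀ w b, arg w b =
      ((∑ i, w i * h i) * (a : ℂ) - ∑ i, w i * ∑ j, H i j * (s b j : ℂ)).re)
    (F1 : Set (Fin N → ℂ))
    (hF1 : F1 = {w : Fin N → ℂ |
      Real.sqrt (∑ i, Complex.normSq (w i)) = 1 ∧ (∀ b, 0 ≤ arg w b) ∧
        ¬(∀ b, arg w b = 0)})
    (P : (Fin N → ℂ) → ℝ)
    (hP : ∀ w, P w = C * ∑ b : Fin B,
      gaussQ (arg w b / ((σz / Real.sqrt 2) * Real.sqrt (∑ i, Complex.normSq (w i)))))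
    (w₁ w₂ : Fin N → ℂ) (hw₁ : w₁ ∈ F1) (hw₂ : w₂ ∈ F1)
    (hmin₁ : ∀ w ∈ F1, P w₁ ≤ P w) (hmin₂ : ∀ w ∈ F1, P w₂ ≤ P w) :
    w₁ = w₂ :=
  mpe_globalMin_unique_general N K B h H a σz C hσ hC s arg harg F1 hF1 P hP w₁ w₂ hw₁ hw₂ hmin₁
    hmin₂
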